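/- arXiv:2105.05352 — 6 statements merged into one kernel-verified Lean document; each statement's English description precedes it below -/
import Mathlib

section
/- Let (r_i) be a sequence of non-negative real numbers satisfying r_{i+1} ≤ r_i − κ r_i^p for all i, with κ > 0 and p ≤ 1. Then for all n, r_n ≤ exp(−κ n / r_0^{1−p}) · r_0. -/
/-- descent sequence bound for `p ≤ 1`. -/
theorem fw_seq_decrease_exp (κ p : ℝ) (hκ : 0 < κ) (hp0 : 0 ≤ p) (hp1 : p ≤ 1)
    (r : ℕ → ℝ) (hr : ∀ i, 0 ≤ r i) (hr0 : 0 < r 0)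
    (hrec : ∀ i, r (i + 1) ≤ r i - κ * r i ^ p) :
    ∀ n : ℕ, r n ≤ Real.exp (-(κ * n) / r 0 ^ (1 - p)) * r 0 := by
  have hR : 0 < r 0 ^ (1 - p) := Real.rpow_pos_of_pos hr0 _
  set c : ℝ := κ / r 0 ^ (1 - p) with hc
  have hcpos : 0 < c := div_pos hκ hR
  -- monotone: r i ≤ r 0
  have hmono : ∀ i, r (i + 1) ≤ r i := fun i =>
    (hrec i).trans (by
      have : 0 ≤ κ * r i ^ p := mul_nonneg hκ.le (Real.rpow_nonneg (hr i) _)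
      linarith)
  have hle0 : ∀ i, r i ≤ r 0 := by
    intro i
    induction i with
    | zero => exact le_rfl
    | succ n ih => exact (hmono n).trans ih
  -- key: κ * r i ^ p ≥ c * r i
  have hkey : ∀ i, c * r i ≤ κ * r i ^ p := by
    intro i
    rw [hc, div_mul_eq_mul_div, div_le_iff₀ hR, mul_assoc]
    apply mul_le_mul_of_nonneg_left _ hκ.le
    rcases eq_or_lt_of_le (hr i) with h0 | h0
    · rw [← h0]
      exact mul_nonneg (Real.rpow_nonneg le_rfl _) hR.le
    · calc r i = r i ^ p * r i ^ (1 - p) := by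
            rw [← Real.rpow_add h0]; simp
        _ ≤ r i ^ p * r 0 ^ (1 - p) := by
            apply mul_le_mul_of_nonneg_left _ (Real.rpow_nonneg (hr i) _)
            exact Real.rpow_le_rpow (hr i) (hle0 i) (by linarith)
  intro n
  induction n with
  | zero => simp
  | succ n ih =>
    have h1 : r (n + 1) ≤ r n * (1 - c) := by
      have := hrec n
      have := hkey n
      nlinarith
    have h2 : r n * (1 - c) ≤ r n * Real.exp (-c) := by
      apply mul_le_mul_of_nonneg_left _ (hr n)
      have := Real.add_one_le_exp (-c)
      linarith
    have h3 : r n * Real.exp (-c) ≤ Real.exp (-(κ * n) / r 0 ^ (1 - p)) * r 0 * Real.exp (-c) :=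
      mul_le_mul_of_nonneg_right ih (Real.exp_pos _).le
    have h4 : Real.exp (-(κ * n) / r 0 ^ (1 - p)) * r 0 * Real.exp (-c)
        = Real.exp (-(κ * (n + 1 : ℕ)) / r 0 ^ (1 - p)) * r 0 := by
      rw [mul_right_comm, ← Real.exp_add, hc]
      congr 1
      push_cast
      field_simp
      ring
    linarith [h1.trans (h2.trans (h3.trans_eq h4))]
end

section
/- Let f : ℝ^d → ℝ be continuously differentiable with L-Lipschitz gradient, and let λ > L. Then the function y ↦ f(y) + (λ/2)‖y − x‖² has a unique minimizer y*, and this minimizer satisfies ‖y* − x‖ ≥ ‖∇f(x)‖ / (2λ). -/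
/-!
The gradient `G y + λ (y - x)` of `g y = f y + λ/2 ‖y - x‖²` is `(λ - L)`-strongly monotone by
Cauchy–Schwarz and the Lipschitz bound on `G`, so `g` is `(λ - L)`-strongly convex. Its sublevel
sets are then bounded, so in finite dimension it attains its minimum, and strict convexity makes
the minimizer `y*` unique. At `y*` the gradient vanishes, `G y* = -λ (y* - x)`, whence
`‖G x‖ ≤ ‖G x - G y*‖ + ‖G y*‖ ≤ (L + λ) ‖y* - x‖ ≤ 2λ ‖y* - x‖`.
-/

open scoped RealInnerProductSpace
open InnerProductSpace Set

section Gradient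

variable {E : Type*} [NormedAddCommGroup E] [InnerProductSpace ℝ E] [CompleteSpace E]
  {h k : E → ℝ} {H : E → E} {g g' a : E} {m : ℝ}

lemma HasGradientAt.add (hh : HasGradientAt h g a) (hk : HasGradientAt k g' a) :
    HasGradientAt (fun y => h y + k y) (g + g') a := by
  rw [hasGradientAt_iff_hasFDerivAt, map_add]
  exact HasFDerivAt.add hh hk

lemma HasGradientAt.sub (hh : HasGradientAt h g a) (hk : HasGradientAt k g' a) :
    HasGradientAt (fun y => h y - k y) (g - g') a := by
  rw [hasGradientAt_iff_hasFDerivAt, map_sub]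
  exact HasFDerivAt.sub hh hk

lemma hasGradientAt_half_mul_norm_sub_sq (c : ℝ) (x y : E) :
    HasGradientAt (fun z => c / 2 * ‖z - x‖ ^ 2) (c • (y - x)) y := by
  rw [hasGradientAt_iff_hasFDerivAt]
  refine (((hasFDerivAt_sub_const (x := y) x).norm_sq).const_mul (c / 2)).congr_fderiv ?_
  ext w
  simp only [ContinuousLinearMap.comp_id, smul_apply, coe_innerSL_apply,
    nsmul_eq_mul, Nat.cast_ofNat, smul_eq_mul, map_smul, toDual_apply_apply]
  ring

lemma HasGradientAt.hasDerivAt_comp_lineMap {b : E} {t : ℝ}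
    (hh : HasGradientAt h g (AffineMap.lineMap a b t)) :
    HasDerivAt (fun s => h (AffineMap.lineMap a b s)) ⟪g, b - a⟫ t :=
  HasFDerivAt.comp_hasDerivAt t hh AffineMap.hasDerivAt_lineMap

lemma IsLocalMin.hasGradientAt_eq_zero (hmin : IsLocalMin h a) (hh : HasGradientAt h g a) :
    g = 0 :=
  (toDual ℝ E).map_eq_zero_iff.mp (hmin.hasFDerivAt_eq_zero hh)

lemma convexOn_univ_of_monotone_gradient (hH : ∀ y, HasGradientAt h (H y) y)
    (hmono : ∀ a b, 0 ≤ ⟪H b - H a, b - a⟫) : ConvexOn ℝ univ h := by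
  refine ⟨convex_univ, fun a _ b _ s t hs ht hst => ?_⟩
  set φ := fun r : ℝ => h (AffineMap.lineMap a b r)
  have hφ : ∀ r, HasDerivAt φ ⟪H (AffineMap.lineMap a b r), b - a⟫ r :=
    fun r => (hH _).hasDerivAt_comp_lineMap
  have hφ' : Monotone (deriv φ) := by
    intro r r' hrr'
    simp only [(hφ _).deriv]
    have := hmono (AffineMap.lineMap a b r) (AffineMap.lineMap a b r')
    have hd : AffineMap.lineMap a b r' - AffineMap.lineMap a b r = (r' - r) • (b - a) := by
      simp only [AffineMap.lineMap_apply_module']; module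
    rw [hd, inner_smul_right, inner_sub_left] at this
    rcases hrr'.eq_or_lt with rfl | hlt
    · rfl
    · exact sub_nonneg.mp (nonneg_of_mul_nonneg_right this (sub_pos.mpr hlt))
  have := (hφ'.convexOn_univ_of_deriv fun r => (hφ r).differentiableAt).2
    (mem_univ 0) (mem_univ 1) hs ht hst
  obtain rfl : s = 1 - t := eq_sub_of_add_eq hst
  simpa [φ, AffineMap.lineMap_apply_module] using this

lemma ConvexOn.add_inner_le_of_hasGradientAt (hconv : ConvexOn ℝ univ h)
    (hh : HasGradientAt h g a) (b : E) : h a + ⟪g, b - a⟫ ≤ h b := by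
  have hφ := hconv.comp_affineMap (AffineMap.lineMap a b : ℝ →ᵃ[ℝ] E)
  have hφ' : HasDerivAt (fun s : ℝ => h (AffineMap.lineMap a b s)) ⟪g, b - a⟫ 0 :=
    HasGradientAt.hasDerivAt_comp_lineMap (by rwa [AffineMap.lineMap_apply_zero])
  have := hφ.le_slope_of_hasDerivAt (mem_univ 0) (mem_univ 1) zero_lt_one hφ'
  simp only [slope_def_field, Function.comp_apply, AffineMap.lineMap_apply_zero,
    AffineMap.lineMap_apply_one, sub_zero, div_one] at this
  linarith

lemma strongConvexOn_univ_of_strongly_monotone_gradient (hH : ∀ y, HasGradientAt h (H y) y)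
    (hmono : ∀ a b, m * ‖b - a‖ ^ 2 ≤ ⟪H b - H a, b - a⟫) : StrongConvexOn univ m h := by
  rw [strongConvexOn_iff_convex]
  refine convexOn_univ_of_monotone_gradient (H := fun y => H y - m • y) (fun y => ?_)
    fun a b => ?_
  · simpa using (hH y).sub (hasGradientAt_half_mul_norm_sub_sq m 0 y)
  · rw [show H b - m • b - (H a - m • a) = (H b - H a) - m • (b - a) by module, inner_sub_left,
      real_inner_smul_left, real_inner_self_eq_norm_sq]
    linarith [hmono a b]

lemma StrongConvexOn.add_inner_add_le_of_hasGradientAt (hconv : StrongConvexOn univ m h)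
    (hh : HasGradientAt h g a) (b : E) : h a + ⟪g, b - a⟫ + m / 2 * ‖b - a‖ ^ 2 ≤ h b := by
  rw [strongConvexOn_iff_convex] at hconv
  have hq : HasGradientAt (fun x => m / 2 * ‖x‖ ^ 2) (m • a) a := by
    simpa using hasGradientAt_half_mul_norm_sub_sq m 0 a
  have := hconv.add_inner_le_of_hasGradientAt (hh.sub hq) b
  have hsq := norm_add_sq_real a (b - a)
  rw [add_sub_cancel] at hsq
  rw [inner_sub_left, real_inner_smul_left] at this
  linear_combination this - m / 2 * hsq

lemma StrongConvexOn.exists_forall_le [ProperSpace E] (hconv : StrongConvexOn univ m h)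
    (hm : 0 < m) (hcont : Continuous h) (hh : HasGradientAt h g a) : ∃ y, ∀ z, h y ≤ h z := by
  refine hcont.exists_forall_le_of_isBounded a
    ((Metric.isBounded_closedBall (x := a) (r := 2 * ‖g‖ / m)).subset fun z hz => ?_)
  -- the sublevel set `{z | h z ≤ h a}` lies in the ball of radius `2‖g‖/m` around `a`
  have hlower := hconv.add_inner_add_le_of_hasGradientAt hh z
  have hcs := neg_le_of_abs_le (abs_real_inner_le_norm g (z - a))
  rw [Metric.mem_closedBall, dist_eq_norm, le_div_iff₀ hm]
  have hz' : h z ≤ h a := hz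
  nlinarith [norm_nonneg (z - a), norm_nonneg g]

lemma strongConvexOn_add_half_mul_norm_sub_sq {f : E → ℝ} {G : E → E} {L : ℝ}
    (hG : ∀ y, HasGradientAt f (G y) y) (hLip : ∀ a b, ‖G b - G a‖ ≤ L * ‖b - a‖)
    (lam : ℝ) (x : E) : StrongConvexOn univ (lam - L) (fun y => f y + lam / 2 * ‖y - x‖ ^ 2) := by
  refine strongConvexOn_univ_of_strongly_monotone_gradient
    (fun y => (hG y).add (hasGradientAt_half_mul_norm_sub_sq lam x y)) fun a b => ?_
  have hcs := neg_le_of_abs_le (abs_real_inner_le_norm (G b - G a) (b - a))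
  have hLab := mul_le_mul_of_nonneg_right (hLip a b) (norm_nonneg (b - a))
  rw [show G b + lam • (b - x) - (G a + lam • (a - x)) = (G b - G a) + lam • (b - a) by module,
    inner_add_left, real_inner_smul_left, real_inner_self_eq_norm_sq]
  nlinarith

end Gradient

/-- for `L`-smooth `f` and `λ > L`, the function
`y ↦ f y + (λ/2)‖y - x‖²` has a unique minimizer `y*`, which satisfies
`‖y* - x‖ ≥ ‖∇f(x)‖ / (2λ)`. -/
theorem unique_minimizer_dist_lower_bound {d : ℕ}
    (f : EuclideanSpace ℝ (Fin d) → ℝ)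
    (G : EuclideanSpace ℝ (Fin d) → EuclideanSpace ℝ (Fin d))
    (hG : ∀ y, HasGradientAt f (G y) y)
    (L lam : ℝ) (hL0 : 0 ≤ L)
    (hLip : ∀ x y, ‖G y - G x‖ ≤ L * ‖y - x‖)
    (hlam : L < lam) (x : EuclideanSpace ℝ (Fin d)) :
    ∃ ystar : EuclideanSpace ℝ (Fin d),
      (∀ z, f ystar + lam / 2 * ‖ystar - x‖ ^ 2 ≤ f z + lam / 2 * ‖z - x‖ ^ 2) ∧
      (∀ y', (∀ z, f y' + lam / 2 * ‖y' - x‖ ^ 2 ≤ f z + lam / 2 * ‖z - x‖ ^ 2) → y' = ystar) ∧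
      ‖G x‖ / (2 * lam) ≤ ‖ystar - x‖ := by
  have hm : 0 < lam - L := sub_pos.mpr hlam
  have hgrad (y) : HasGradientAt (fun y => f y + lam / 2 * ‖y - x‖ ^ 2) (G y + lam • (y - x)) y :=
    (hG y).add (hasGradientAt_half_mul_norm_sub_sq lam x y)
  have hconv := strongConvexOn_add_half_mul_norm_sub_sq hG hLip lam x
  obtain ⟨ystar, hmin⟩ := hconv.exists_forall_le hm
    (continuous_iff_continuousAt.mpr fun y => (hgrad y).continuousAt) (hgrad x)
  refine ⟨ystar, hmin, fun y hy => (hconv.strictConvexOn hm).eq_of_isMinOn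
    (isMinOn_univ_iff.mpr hy) (isMinOn_univ_iff.mpr hmin) (mem_univ y) (mem_univ ystar), ?_⟩
  have hstat : G ystar = -(lam • (ystar - x)) := eq_neg_of_add_eq_zero_left <|
    IsLocalMin.hasGradientAt_eq_zero (.of_forall hmin) (hgrad ystar)
  have hlam0 : 0 < lam := hL0.trans_lt hlam
  have hnorm : ‖G ystar‖ = lam * ‖ystar - x‖ := by
    rw [hstat, norm_neg, norm_smul, Real.norm_of_nonneg hlam0.le]
  rw [div_le_iff₀ (by positivity)]
  calc ‖G x‖ ≤ ‖G x - G ystar‖ + ‖G ystar‖ := norm_le_norm_sub_add _ _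
    _ ≤ L * ‖x - ystar‖ + lam * ‖ystar - x‖ := add_le_add (hLip ystar x) hnorm.le
    _ ≤ ‖ystar - x‖ * (2 * lam) := by
      rw [norm_sub_rev]; nlinarith [norm_nonneg (ystar - x)]
end

section
/- Let f : ℝ^d → ℝ be differentiable and ρ-semiconvex. For each x ∈ ℝ^d, the Moreau-type envelope z_x(λ) := inf_y [f(y) + (λ/2)‖y − x‖²] is differentiable on (ρ, ∞) with derivative z_x'(λ) = (1/2)‖y*_{λ,x} − x‖², where y*_{λ,x} is the unique minimizer of y ↦ f(y) + (λ/2)‖y − x‖². -/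
/-!
Testing the minimality of `y*_μ` against `y*_λ` shows that `½‖y*_λ - x‖²` is a supergradient at
`λ` of the envelope `z_x`, which is an infimum of functions affine in `λ`. A function on `ℝ`
having a supergradient at every point of a neighbourhood, continuous at the base point, is
differentiable there with that derivative. Continuity of `λ ↦ y*_λ` comes from the
`(λ - ρ)`-strong convexity of the objective: tested at `y*_μ` it bounds `‖y*_μ - y*_λ‖²` by
`(μ - λ)` times the difference of the two supergradients, which are antitone, hence locally
bounded.
-/

open Set Filter Topology

theorem antitoneOn_of_le_add_mul {g s : ℝ → ℝ} {U : Set ℝ}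
    (h : ∀ l ∈ U, ∀ μ ∈ U, g μ ≤ g l + (μ - l) * s l) : AntitoneOn s U := by
  intro l hl μ hμ hlμ
  rcases hlμ.eq_or_lt with rfl | hlt
  · exact le_rfl
  · nlinarith [h l hl μ hμ, h μ hμ l hl]

theorem abs_slope_sub_le_of_le_add_mul {g s : ℝ → ℝ} {U : Set ℝ}
    (h : ∀ l ∈ U, ∀ μ ∈ U, g μ ≤ g l + (μ - l) * s l) {a μ : ℝ} (ha : a ∈ U) (hμ : μ ∈ U)
    (hne : μ ≠ a) : |slope g a μ - s a| ≤ |s μ - s a| := by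
  have hup := h a ha μ hμ
  have hlow := h μ hμ a ha
  rw [slope_def_field, abs_le]
  rcases hne.lt_or_gt with hlt | hgt
  · have hd : μ - a < 0 := sub_neg.mpr hlt
    constructor
    · rw [le_sub_iff_add_le, le_div_iff_of_neg hd]; nlinarith [le_abs_self (s μ - s a)]
    · rw [sub_le_iff_le_add, div_le_iff_of_neg hd]
      nlinarith [mul_le_mul_of_nonpos_left (le_abs_self (s μ - s a)) hd.le]
  · have hd : 0 < μ - a := sub_pos.mpr hgt
    constructor
    · rw [le_sub_iff_add_le, le_div_iff₀ hd]; nlinarith [neg_abs_le (s μ - s a)]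
    · rw [sub_le_iff_le_add, div_le_iff₀ hd]
      nlinarith [mul_le_mul_of_nonneg_left (neg_abs_le (s μ - s a)) hd.le]

theorem hasDerivAt_of_le_add_mul {g s : ℝ → ℝ} {U : Set ℝ} {a : ℝ} (hU : U ∈ 𝓝 a)
    (h : ∀ l ∈ U, ∀ μ ∈ U, g μ ≤ g l + (μ - l) * s l) (hs : ContinuousAt s a) :
    HasDerivAt g (s a) a := by
  rw [hasDerivAt_iff_tendsto_slope, tendsto_iff_norm_sub_tendsto_zero]
  have hs' : Tendsto (fun μ ↦ ‖s μ - s a‖) (𝓝[≠] a) (𝓝 0) :=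
    (tendsto_iff_norm_sub_tendsto_zero.mp hs).mono_left nhdsWithin_le_nhds
  refine squeeze_zero' (Eventually.of_forall fun _ ↦ norm_nonneg _) ?_ hs'
  filter_upwards [nhdsWithin_le_nhds hU, self_mem_nhdsWithin] with μ hμ hne
  exact abs_slope_sub_le_of_le_add_mul h (mem_of_mem_nhds hU) hμ hne

theorem continuousAt_of_sq_norm_sub_le {E : Type*} [SeminormedAddCommGroup E] {g : ℝ → E}
    {a K : ℝ} (h : ∀ᶠ μ in 𝓝 a, ‖g μ - g a‖ ^ 2 ≤ K * |μ - a|) : ContinuousAt g a := by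
  rw [ContinuousAt, tendsto_iff_norm_sub_tendsto_zero]
  have hbound : Tendsto (fun μ ↦ √(K * |μ - a|)) (𝓝 a) (𝓝 0) := by
    simpa using (show Continuous fun μ ↦ √(K * |μ - a|) by fun_prop).tendsto a
  refine squeeze_zero' (Eventually.of_forall fun _ ↦ norm_nonneg _) ?_ hbound
  filter_upwards [h] with μ hμ
  exact Real.le_sqrt_of_sq_le hμ

theorem StrongConvexOn.mul_sq_norm_sub_le_sub_of_isMinOn {E : Type*} [NormedAddCommGroup E]
    [NormedSpace ℝ E] {s : Set E} {m : ℝ} {φ : E → ℝ}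
    (hφ : StrongConvexOn s m φ) {y w : E} (hy : y ∈ s) (hw : w ∈ s) (hmin : IsMinOn φ s y) :
    m / 4 * ‖w - y‖ ^ 2 ≤ φ w - φ y := by
  have hmid := hφ.2 hy hw (by norm_num : (0 : ℝ) ≤ 1 / 2) (by norm_num : (0 : ℝ) ≤ 1 / 2)
    (by norm_num)
  have hle : φ y ≤ φ ((1 / 2 : ℝ) • y + (1 / 2 : ℝ) • w) :=
    hmin (hφ.1 hy hw (by norm_num) (by norm_num) (by norm_num))
  rw [norm_sub_rev, smul_eq_mul, smul_eq_mul] at hmid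
  linarith

section Envelope

variable {E : Type*} [NormedAddCommGroup E] {f : E → ℝ} {x : E} {ystar : ℝ → E} {ρ : ℝ}

theorem envelope_le_add_mul
    (hmin : ∀ lam, ρ < lam →
      ∀ z, f (ystar lam) + lam / 2 * ‖ystar lam - x‖ ^ 2 ≤ f z + lam / 2 * ‖z - x‖ ^ 2)
    (l : ℝ) {μ : ℝ} (hμ : ρ < μ) :
    f (ystar μ) + μ / 2 * ‖ystar μ - x‖ ^ 2 ≤
      f (ystar l) + l / 2 * ‖ystar l - x‖ ^ 2 + (μ - l) * (1 / 2 * ‖ystar l - x‖ ^ 2) := by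
  linarith [hmin μ hμ (ystar l)]

variable [InnerProductSpace ℝ E]

theorem ConvexOn.strongConvexOn_add_mul_sq_norm_sub
    (hf : ConvexOn ℝ univ fun y ↦ f y + ρ / 2 * ‖y‖ ^ 2) (l : ℝ) (x : E) :
    StrongConvexOn univ (l - ρ) fun y ↦ f y + l / 2 * ‖y - x‖ ^ 2 := by
  rw [strongConvexOn_iff_convex]
  refine ((hf.add (((-l) • innerₛₗ ℝ x).convexOn convex_univ)).add_const
    (l / 2 * ‖x‖ ^ 2)).congr fun y _ ↦ ?_
  simp only [Pi.add_apply, LinearMap.smul_apply, innerₛₗ_apply_apply, smul_eq_mul,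
    norm_sub_sq_real, real_inner_comm x y]
  ring

theorem mul_sq_norm_minimizer_sub_le
    (hsemi : ConvexOn ℝ univ fun y ↦ f y + ρ / 2 * ‖y‖ ^ 2)
    (hmin : ∀ lam, ρ < lam →
      ∀ z, f (ystar lam) + lam / 2 * ‖ystar lam - x‖ ^ 2 ≤ f z + lam / 2 * ‖z - x‖ ^ 2)
    {l μ : ℝ} (hl : ρ < l) (hμ : ρ < μ) :
    (l - ρ) / 4 * ‖ystar μ - ystar l‖ ^ 2 ≤
      (μ - l) * (1 / 2 * ‖ystar l - x‖ ^ 2 - 1 / 2 * ‖ystar μ - x‖ ^ 2) := by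
  have hstrong := (hsemi.strongConvexOn_add_mul_sq_norm_sub l x).mul_sq_norm_sub_le_sub_of_isMinOn
    (mem_univ (ystar l)) (mem_univ (ystar μ)) fun z _ ↦ hmin l hl z
  linarith [envelope_le_add_mul hmin l hμ]

theorem continuousAt_minimizer
    (hsemi : ConvexOn ℝ univ fun y ↦ f y + ρ / 2 * ‖y‖ ^ 2)
    (hmin : ∀ lam, ρ < lam →
      ∀ z, f (ystar lam) + lam / 2 * ‖ystar lam - x‖ ^ 2 ≤ f z + lam / 2 * ‖z - x‖ ^ 2)
    {l : ℝ} (hl : ρ < l) : ContinuousAt ystar l := by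
  set s : ℝ → ℝ := fun μ ↦ 1 / 2 * ‖ystar μ - x‖ ^ 2
  have hanti : AntitoneOn s (Ioi ρ) :=
    antitoneOn_of_le_add_mul fun l _ _ hμ ↦ envelope_le_add_mul hmin l hμ
  have hs0 (ν : ℝ) : 0 ≤ s ν := by positivity
  obtain ⟨ρ', hρρ', hρ'l⟩ := exists_between hl
  refine continuousAt_of_sq_norm_sub_le (K := 4 * s ρ' / (l - ρ)) ?_
  filter_upwards [Ioi_mem_nhds hρ'l] with μ hμ
  have hμρ : ρ < μ := hρρ'.trans hμ
  have hkey : (l - ρ) / 4 * ‖ystar μ - ystar l‖ ^ 2 ≤ (μ - l) * (s l - s μ) :=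
    mul_sq_norm_minimizer_sub_le hsemi hmin hl hμρ
  have hsμ : s μ ≤ s ρ' := hanti hρρ' hμρ (le_of_lt hμ)
  have hsl : s l ≤ s ρ' := hanti hρρ' hl hρ'l.le
  rw [div_mul_eq_mul_div, le_div_iff₀ (sub_pos.mpr hl)]
  rcases le_total l μ with hlμ | hμl
  · have hd : 0 ≤ μ - l := sub_nonneg.mpr hlμ
    rw [abs_of_nonneg hd]
    nlinarith [mul_nonneg hd (hs0 μ), mul_le_mul_of_nonneg_left hsl hd]
  · have hd : 0 ≤ l - μ := sub_nonneg.mpr hμl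
    rw [abs_of_nonpos (sub_nonpos.mpr hμl)]
    nlinarith [mul_nonneg hd (hs0 l), mul_le_mul_of_nonneg_left hsμ hd]

end Envelope

theorem moreau_envelope_hasDerivAt_general {d : ℕ}
    (f : EuclideanSpace ℝ (Fin d) → ℝ)
    (ρ : ℝ)
    (hsemi : ConvexOn ℝ Set.univ (fun y => f y + ρ / 2 * ‖y‖ ^ 2))
    (x : EuclideanSpace ℝ (Fin d))
    (ystar : ℝ → EuclideanSpace ℝ (Fin d))
    (hmin : ∀ lam, ρ < lam →
      ∀ z, f (ystar lam) + lam / 2 * ‖ystar lam - x‖ ^ 2 ≤ f z + lam / 2 * ‖z - x‖ ^ 2) :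
    ∀ lam, ρ < lam →
      HasDerivAt (fun l : ℝ => f (ystar l) + l / 2 * ‖ystar l - x‖ ^ 2)
        (1 / 2 * ‖ystar lam - x‖ ^ 2) lam := by
  intro lam hlam
  have hs : ContinuousAt (fun l ↦ 1 / 2 * ‖ystar l - x‖ ^ 2) lam :=
    (((continuousAt_minimizer hsemi hmin hlam).sub continuousAt_const).norm.pow 2).const_mul _
  exact hasDerivAt_of_le_add_mul (Ioi_mem_nhds hlam)
    (fun l _ _ hμ ↦ envelope_le_add_mul hmin l hμ) hs

/-- the Moreau-type envelope `z_x(λ) = inf_y [f y + (λ/2)‖y - x‖²]`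
(realized through its unique minimizer `y*_{λ,x}`) is differentiable on `(ρ, ∞)`
with derivative `(1/2)‖y*_{λ,x} - x‖²`. -/
theorem moreau_envelope_hasDerivAt {d : ℕ}
    (f : EuclideanSpace ℝ (Fin d) → ℝ)
    (G : EuclideanSpace ℝ (Fin d) → EuclideanSpace ℝ (Fin d))
    (hG : ∀ y, HasGradientAt f (G y) y)
    (ρ : ℝ) (hρ : 0 ≤ ρ)
    (hsemi : ConvexOn ℝ Set.univ (fun y => f y + ρ / 2 * ‖y‖ ^ 2))
    (x : EuclideanSpace ℝ (Fin d))
    (ystar : ℝ → EuclideanSpace ℝ (Fin d))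
    (hmin : ∀ lam, ρ < lam →
      ∀ z, f (ystar lam) + lam / 2 * ‖ystar lam - x‖ ^ 2 ≤ f z + lam / 2 * ‖z - x‖ ^ 2) :
    ∀ lam, ρ < lam →
      HasDerivAt (fun l : ℝ => f (ystar l) + l / 2 * ‖ystar l - x‖ ^ 2)
        (1 / 2 * ‖ystar lam - x‖ ^ 2) lam :=
  moreau_envelope_hasDerivAt_general f ρ hsemi x ystar hmin
end

section
/- Let f : ℝ^d → ℝ be differentiable and ρ-semiconvex, and let ρ < λ₁ ≤ λ₂. Denote by y*_{λ,x} the unique minimizer of y ↦ f(y) + (λ/2)‖y − x‖². Then ‖y*_{λ₂,x} − y*_{λ₁,x}‖ ≤ √((λ₂ − λ₁)/(λ₂ − ρ)) · ‖y*_{λ₁,x} − x‖. -/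
private lemma combo_sq {E : Type*} [NormedAddCommGroup E] [InnerProductSpace ℝ E]
    (a b w : E) (t : ℝ) :
    ‖(a + t • (b - a)) - w‖ ^ 2
      = (1 - t) * ‖a - w‖ ^ 2 + t * ‖b - w‖ ^ 2 - t * (1 - t) * ‖b - a‖ ^ 2 := by
  have h1 : (a + t • (b - a)) - w = (a - w) + t • (b - a) := by abel
  have h2 : b - w = (a - w) + (b - a) := by abel
  rw [h1, h2, norm_add_sq_real, norm_add_sq_real, norm_smul, real_inner_smul_right,
    mul_pow, Real.norm_eq_abs, sq_abs]
  ring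

/-- Hölder-type continuity of the proximal map in `λ` for a
differentiable `ρ`-semiconvex function. -/
theorem prox_map_holder_in_lambda {d : ℕ}
    (f : EuclideanSpace ℝ (Fin d) → ℝ)
    (G : EuclideanSpace ℝ (Fin d) → EuclideanSpace ℝ (Fin d))
    (hG : ∀ y, HasGradientAt f (G y) y)
    (ρ : ℝ) (hρ : 0 ≤ ρ)
    (hsemi : ConvexOn ℝ Set.univ (fun y => f y + ρ / 2 * ‖y‖ ^ 2))
    (x : EuclideanSpace ℝ (Fin d))
    (lam₁ lam₂ : ℝ) (h₁ : ρ < lam₁) (h₁₂ : lam₁ ≤ lam₂)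
    (y₁ y₂ : EuclideanSpace ℝ (Fin d))
    (hmin₁ : ∀ z, f y₁ + lam₁ / 2 * ‖y₁ - x‖ ^ 2 ≤ f z + lam₁ / 2 * ‖z - x‖ ^ 2)
    (hmin₂ : ∀ z, f y₂ + lam₂ / 2 * ‖y₂ - x‖ ^ 2 ≤ f z + lam₂ / 2 * ‖z - x‖ ^ 2) :
    ‖y₂ - y₁‖ ≤ Real.sqrt ((lam₂ - lam₁) / (lam₂ - ρ)) * ‖y₁ - x‖ := by
  have hρ₂ : ρ < lam₂ := lt_of_lt_of_le h₁ h₁₂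
  set c : ℝ := (lam₂ - ρ) / 2 * ‖y₁ - y₂‖ ^ 2 with hc
  set A : ℝ := (f y₁ + lam₂ / 2 * ‖y₁ - x‖ ^ 2) - (f y₂ + lam₂ / 2 * ‖y₂ - x‖ ^ 2) with hA
  have hA0 : 0 ≤ A := by have := hmin₂ y₁; simp only [hA]; linarith
  have hc0 : 0 ≤ c :=
    mul_nonneg (by linarith) (by positivity)
  -- key: (1-t)*c ≤ A for t ∈ (0,1]
  have key : ∀ t : ℝ, 0 < t → t ≤ 1 → (1 - t) * c ≤ A := by
    intro t ht0 ht1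
    have hzc : y₂ + t • (y₁ - y₂) = (1 - t) • y₂ + t • y₁ := by module
    have hconv := hsemi.2 (Set.mem_univ y₂) (Set.mem_univ y₁)
      (by linarith : (0:ℝ) ≤ 1 - t) (le_of_lt ht0) (by ring)
    simp only [← hzc, smul_eq_mul] at hconv
    have e1 : ‖(y₂ + t • (y₁ - y₂)) - x‖ ^ 2
        = (1 - t) * ‖y₂ - x‖ ^ 2 + t * ‖y₁ - x‖ ^ 2 - t * (1 - t) * ‖y₁ - y₂‖ ^ 2 :=
      combo_sq y₂ y₁ x t
    have e2 : ‖y₂ + t • (y₁ - y₂)‖ ^ 2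
        = (1 - t) * ‖y₂‖ ^ 2 + t * ‖y₁‖ ^ 2 - t * (1 - t) * ‖y₁ - y₂‖ ^ 2 := by
      have := combo_sq y₂ y₁ 0 t
      simpa using this
    rw [e2] at hconv
    have hminz := hmin₂ (y₂ + t • (y₁ - y₂))
    rw [e1] at hminz
    have step : t * ((1 - t) * c) ≤ t * A := by
      simp only [hc, hA]
      nlinarith [hconv, hminz]
    exact le_of_mul_le_mul_left step ht0
  have hcA : c ≤ A := by
    by_contra h
    push_neg at h
    have hcpos : 0 < c := lt_of_le_of_lt hA0 h
    clear_value c A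
    set t : ℝ := min 1 ((c - A) / (2 * c)) with htd
    have ht0 : 0 < t := lt_min one_pos (div_pos (by linarith) (by linarith))
    have ht1 : t ≤ 1 := min_le_left _ _
    clear_value t
    have h2 := key t ht0 ht1
    have htle : t * c ≤ (c - A) / 2 := by
      have ht' : t ≤ (c - A) / (2 * c) := htd ▸ min_le_right 1 ((c - A) / (2 * c))
      calc t * c ≤ (c - A) / (2 * c) * c := by nlinarith
        _ = (c - A) / 2 := by field_simp
    nlinarith
  -- A ≤ (lam₂ - lam₁)/2 * ‖y₁ - x‖²
  have hAup : A ≤ (lam₂ - lam₁) / 2 * ‖y₁ - x‖ ^ 2 := by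
    have h1 := hmin₁ y₂
    have hnn : (0:ℝ) ≤ ‖y₂ - x‖ ^ 2 := by positivity
    simp only [hA]; nlinarith
  have hsq : ‖y₂ - y₁‖ ^ 2 ≤ (lam₂ - lam₁) / (lam₂ - ρ) * ‖y₁ - x‖ ^ 2 := by
    have hyy : ‖y₂ - y₁‖ = ‖y₁ - y₂‖ := norm_sub_rev _ _
    rw [hyy]
    have hpos : (0:ℝ) < lam₂ - ρ := by linarith
    rw [div_mul_eq_mul_div, le_div_iff₀ hpos]
    have hfin : (lam₂ - ρ) / 2 * ‖y₁ - y₂‖ ^ 2 ≤ (lam₂ - lam₁) / 2 * ‖y₁ - x‖ ^ 2 :=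
      le_trans hcA hAup
    nlinarith [hfin]
  calc ‖y₂ - y₁‖ = Real.sqrt (‖y₂ - y₁‖ ^ 2) := by
        rw [Real.sqrt_sq (norm_nonneg _)]
    _ ≤ Real.sqrt ((lam₂ - lam₁) / (lam₂ - ρ) * ‖y₁ - x‖ ^ 2) := Real.sqrt_le_sqrt hsq
    _ = Real.sqrt ((lam₂ - lam₁) / (lam₂ - ρ)) * ‖y₁ - x‖ := by
        rw [Real.sqrt_mul (div_nonneg (by linarith) (by linarith)), Real.sqrt_sq (norm_nonneg _)]
end

section
/- Under the assumptions of the previous primal-dual gap lemma, if additionally ψ* is differentiable with M-Hölder continuous derivative of exponent ν (|ψ*'(t) − ψ*'(z)| ≤ M|t − z|^ν), then with t = (ψ*)'(λ): ∫ f dπ + ψ(∫ c dπ) − M|t − ∫ c dπ|^{1+ν} ≤ g(λ) − ψ*(λ). -/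
open MeasureTheory

/-- primal-dual gap bound with Hölder-smooth penalty. Under the
hypotheses of the primal-dual gap lemma, if additionally the penalty is
differentiable with `M`-Hölder derivative of exponent `ν` and `t = (ψ*)'(λ)`
(so that `λ = ψ'(t)` and `λ* = ψ'(z)` by conjugate duality), then
`∫ f dπ + ψ(∫ c dπ) − M |t − ∫ c dπ|^{1+ν} ≤ g(λ) − ψ*(λ)`. -/
theorem primal_dual_gap_bound_holder {S₀ S₁ : Type*} [MeasurableSpace S₀] [MeasurableSpace S₁]
    (μ : Measure S₀) [IsProbabilityMeasure μ]
    (π : Measure (S₀ × S₁)) [IsProbabilityMeasure π]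
    (hmarg : π.map Prod.fst = μ)
    (f : S₁ → ℝ) (c : S₀ × S₁ → ℝ) (hc0 : ∀ q, 0 ≤ c q)
    (hfint : Integrable (fun q : S₀ × S₁ => f q.2) π) (hcint : Integrable c π)
    (ψ ψstar : ℝ → ℝ) (hψconv : ConvexOn ℝ Set.univ ψ)
    (M nu : ℝ) (hM : 0 ≤ M) (hnu : 0 ≤ nu)
    (dψ : ℝ → ℝ) (hderiv : ∀ s, HasDerivAt ψ (dψ s) s)
    (hHolder : ∀ s u, |dψ s - dψ u| ≤ M * |s - u| ^ nu)
    (lam g_at : ℝ)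
    (hg : g_at = ∫ q, (f q.2 + lam * c q) ∂π)
    (z : ℝ) (hzdef : z = ∫ q, c q ∂π)
    (lamstar t : ℝ)
    (hlam : lam = dψ t) (hlamstar : lamstar = dψ z)
    (hsub1 : lamstar * z = ψstar lamstar + ψ z)
    (hsub2 : ∀ s, ψstar lam + t * (s - lam) ≤ ψstar s) :
    (∫ q, f q.2 ∂π) + ψ z - M * |t - z| ^ (1 + nu) ≤ g_at - ψstar lam := by
  have hgsplit : g_at = (∫ q, f q.2 ∂π) + lam * z := by
    rw [hg, hzdef, integral_add hfint (hcint.const_mul lam), integral_const_mul]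
  have key : (lamstar - lam) * (z - t) ≤ M * |t - z| ^ (1 + nu) := by
    rcases eq_or_ne t z with h | h
    · subst h
      rw [hlam, hlamstar, sub_self, sub_self, mul_zero, abs_zero,
        Real.zero_rpow (by positivity)]
      simp
    · have hne : |t - z| ≠ 0 := by
        simp [sub_eq_zero, h]
      have h1 : (lamstar - lam) * (z - t) ≤ |lamstar - lam| * |z - t| := by
        calc (lamstar - lam) * (z - t) ≤ |(lamstar - lam) * (z - t)| := le_abs_self _
          _ = |lamstar - lam| * |z - t| := abs_mul _ _
      have h2 : |lamstar - lam| ≤ M * |z - t| ^ nu := by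
        rw [hlam, hlamstar]; exact hHolder z t
      have h3 : |lamstar - lam| * |z - t| ≤ (M * |z - t| ^ nu) * |z - t| :=
        mul_le_mul_of_nonneg_right h2 (abs_nonneg _)
      have habs : |z - t| = |t - z| := abs_sub_comm _ _
      have h4 : (M * |z - t| ^ nu) * |z - t| = M * |t - z| ^ (1 + nu) := by
        rw [habs, mul_assoc, mul_comm (|t - z| ^ nu),
          ← Real.rpow_one_add' (abs_nonneg _) (by positivity)]
      linarith
  have hs := hsub2 lamstar
  rw [hgsplit]
  nlinarith [key, hs, hsub1]
end

section
/- Let g : ℝ → ℝ∪{−∞} be concave and upper semicontinuous with g(λ) = E_μ[z_x(λ)], where z_x(λ) = inf_y[f(y) + (λ/2)‖y − x‖²] and f is L-smooth and ρ-semiconvex with ρ ≤ L. If for all λ > L one has E_μ[lim_{δ→0} inf_{y δ-optimal} ‖y − x‖²/2] ≥ E_μ[‖∇f(x)‖²]/(8λ²), and ψ* is convex non-decreasing with left derivative at ρ satisfying ∂₋ψ*(ρ) ≤ E_μ[‖∇f(x)‖²]/(8L²), then g(ρ) − ψ*(ρ) ≥ g(λ) − ψ*(λ) for every λ < ρ;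 i.e., the dual supremum over ℝ may be restricted to λ ≥ ρ. -/
open MeasureTheory

theorem ConcaveOn.add_mul_sub_le_of_le {S : Set ℝ} {g : ℝ → ℝ} (hg : ConcaveOn ℝ S g)
    {s a b c : ℝ} (ha : a ∈ S) (hc : c ∈ S) (hab : a < b) (hbc : b ≤ c)
    (hsec : g a + s * (c - a) ≤ g c) : g a + s * (b - a) ≤ g b := by
  have hb : b ∈ S := hg.1.ordConnected.out ha hc ⟨hab.le, hbc⟩
  have hac : 0 < c - a := by linarith
  have hba : 0 < b - a := sub_pos.2 hab
  have hslope_c : s ≤ (g c - g a) / (c - a) := (le_div_iff₀ hac).2 (by linarith)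
  have hslope_mono : (g c - g a) / (c - a) ≤ (g b - g a) / (b - a) := by
    have := hg.neg.secant_mono ha hb hc hab.ne' (hab.trans_le hbc).ne' hbc
    simp only [Pi.neg_apply] at this
    rwa [← neg_sub', neg_div, ← neg_sub', neg_div, neg_le_neg_iff] at this
  have := (le_div_iff₀ hba).1 (hslope_c.trans hslope_mono)
  linarith

theorem dual_sup_restricted_to_lambda_ge_rho_general
    (L ρ : ℝ) (hρL : ρ ≤ L)
    (A : ℝ)
    (g : ℝ → ℝ) (hconc : ConcaveOn ℝ Set.univ g)
    (hg : ∀ lam, L ≤ lam → ∀ lam', lam' < lam →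
      g lam' + A / (8 * lam ^ 2) * (lam - lam') ≤ g lam)
    (ψstar : ℝ → ℝ)
    (hψderiv : ∀ lam', lam' < ρ → ψstar ρ - ψstar lam' ≤ A / (8 * L ^ 2) * (ρ - lam')) :
    ∀ lam', lam' < ρ → g lam' - ψstar lam' ≤ g ρ - ψstar ρ := by
  intro lam' hlt
  -- concavity carries the slope `A / (8L²)` of `g` on `[lam', L]` down to `[lam', ρ]`,
  -- where it dominates the slope of `ψstar`
  have hg_rho : g lam' + A / (8 * L ^ 2) * (ρ - lam') ≤ g ρ :=
    hconc.add_mul_sub_le_of_le trivial trivial hlt hρL (hg L le_rfl lam' (hlt.trans_le hρL))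
  linarith [hψderiv lam' hlt]

/-- the dual objective `g(λ) − ψ*(λ)` is maximized on `λ ≥ ρ`.
Here `g(λ) = E_μ[inf_y (f y + (λ/2)‖y−x‖²)]` is concave with right derivative
at least `A/(8λ²)` for `λ ≥ L` (where `A = E_μ[‖∇f‖²]`), encoded through the
corresponding secant inequality; `ψ*` is convex, non-decreasing, with left
derivative at `ρ` at most `A/(8L²)`, encoded through the corresponding secant
bound. Then `g(ρ) − ψ*(ρ) ≥ g(λ') − ψ*(λ')` for every `λ' < ρ`. -/
theorem dual_sup_restricted_to_lambda_ge_rho {d : ℕ}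
    (f : EuclideanSpace ℝ (Fin d) → ℝ)
    (G : EuclideanSpace ℝ (Fin d) → EuclideanSpace ℝ (Fin d))
    (hG : ∀ y, HasGradientAt f (G y) y)
    (L ρ : ℝ) (hρ0 : 0 ≤ ρ) (hρL : ρ ≤ L) (hL : 0 < L)
    (hsmooth : ∀ x y, ‖G x - G y‖ ≤ L * ‖x - y‖)
    (hsemi : ConvexOn ℝ Set.univ (fun y => f y + ρ / 2 * ‖y‖ ^ 2))
    (μ : Measure (EuclideanSpace ℝ (Fin d))) [IsProbabilityMeasure μ]
    (hGint : Integrable (fun x => ‖G x‖ ^ 2) μ)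
    (A : ℝ) (hA : A = ∫ x, ‖G x‖ ^ 2 ∂μ)
    (g : ℝ → ℝ) (hconc : ConcaveOn ℝ Set.univ g)
    (hg : ∀ lam, L ≤ lam → ∀ lam', lam' < lam →
      g lam' + A / (8 * lam ^ 2) * (lam - lam') ≤ g lam)
    (ψstar : ℝ → ℝ) (hψconv : ConvexOn ℝ Set.univ ψstar) (hψmono : Monotone ψstar)
    (hψderiv : ∀ lam', lam' < ρ → ψstar ρ - ψstar lam' ≤ A / (8 * L ^ 2) * (ρ - lam')) :
    ∀ lam', lam' < ρ → g lam' - ψstar lam' ≤ g ρ - ψstar ρ :=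
  dual_sup_restricted_to_lambda_ge_rho_general L ρ hρL A g hconc hg ψstar hψderiv
end
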